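/- Take r = 5/6 (so x = √11/12, y = 5/12) and let Λ be the subgroup of ℤ² generated by (3, −1) and (2, 1), which has index 5 in ℤ². Then the separation of the induced 5-colouring of the tiles T(i, j) equals 5/6: any two distinct same-coloured tiles are at distance at least 5/6 from each other, and this value is attained. -/

import Mathlib

noncomputable section

/-- The Euclidean plane ℝ². -/
abbrev Plane := EuclideanSpace ℝ (Fin 2)

/-- The point (a, b) of the Euclidean plane. -/
def pt (a b : ℝ) : Plane := WithLp.toLp 2 ![a, b]

/-- The semi-regular hexagon K(r): with y = r/2 and x = √(1 − r²)/2, the closed convex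
hull of the six points (0, 1/2), (x, y), (x, −y), (0, −1/2), (−x, −y), (−x, y). -/
def hexK (r : ℝ) : Set Plane :=
  convexHull ℝ
    {pt 0 (1 / 2), pt (Real.sqrt (1 - r ^ 2) / 2) (r / 2),
      pt (Real.sqrt (1 - r ^ 2) / 2) (-(r / 2)), pt 0 (-(1 / 2)),
      pt (-(Real.sqrt (1 - r ^ 2) / 2)) (-(r / 2)),
      pt (-(Real.sqrt (1 - r ^ 2) / 2)) (r / 2)}

/-- The center c(i, j) = ((2i + j)·x, j·(y + 1/2)) of the tile with index (i, j). -/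
def center (r : ℝ) (i j : ℤ) : Plane :=
  pt ((2 * (i : ℝ) + (j : ℝ)) * (Real.sqrt (1 - r ^ 2) / 2)) ((j : ℝ) * (r / 2 + 1 / 2))

/-- The tile T(i, j) = c(i, j) + K(r). -/
def tile (r : ℝ) (i j : ℤ) : Set Plane :=
  (fun p => center r i j + p) '' hexK r

/-- The set of distances realized by points in two distinct same-coloured tiles,
for the colouring of the tiles T(i, j) by the cosets of a subgroup Λ ≤ ℤ²:
tiles T(i, j) and T(i', j') get the same colour iff (i − i', j − j') ∈ Λ.
The separation of the colouring is the infimum of this set. -/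
def sameColourDists (r : ℝ) (Λ : AddSubgroup (ℤ × ℤ)) : Set ℝ :=
  {d : ℝ | ∃ (i j i' j' : ℤ) (p q : Plane),
    (i, j) ≠ (i', j') ∧ (i - i', j - j') ∈ Λ ∧
    p ∈ tile r i j ∧ q ∈ tile r i' j' ∧ d = dist p q}

end

/-!
If `|⟪w, ·⟫| ≤ M` on the hexagon, then points of two tiles whose centres differ by `c` are at
distance at least `(|⟪w, c⟫| - 2M) / ‖w‖`. Two distinct tiles of the same colour have index
difference `(a, b) ≠ 0` with `5 ∣ a - 2b`, and one of three directions works: `(1, 0)` when `b = 0`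
(then `|a| ≥ 5`), `(0, 1)` when `|b| ≥ 2` (this case is sharp), and `(√11/4, ±1/12)`, of length
`5/6`, when `|b| = 1` (then `|2a + b| ≥ 5`). Equality holds for the apexes `(0, 1/2)` of `T(0, 0)`
and `(0, 4/3)` of `T(-1, 2)`.
-/

open RealInnerProductSpace

section InnerProduct

variable {E : Type*} [NormedAddCommGroup E] [InnerProductSpace ℝ E]

theorem abs_inner_le_of_mem_convexHull {s : Set E} {w p : E} {M : ℝ}
    (hs : ∀ v ∈ s, |⟪w, v⟫| ≤ M) (hp : p ∈ convexHull ℝ s) : |⟪w, p⟫| ≤ M := by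
  have hconv : Convex ℝ {p : E | |⟪w, p⟫| ≤ M} := by
    convert (convex_Icc (-M) M).linear_preimage (innerₗ E w) using 1
    ext p
    simp [abs_le]
  exact convexHull_min hs hconv hp

theorem sub_two_mul_le_norm_mul_dist {w c c' u v : E} {M D : ℝ}
    (hu : |⟪w, u⟫| ≤ M) (hv : |⟪w, v⟫| ≤ M) (hD : D ≤ |⟪w, c - c'⟫|) :
    D - 2 * M ≤ ‖w‖ * dist (c + u) (c' + v) := by
  have hsplit : ⟪w, (c + u) - (c' + v)⟫ = ⟪w, c - c'⟫ + ⟪w, u⟫ - ⟪w, v⟫ := by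
    rw [show (c + u) - (c' + v) = (c - c') + u - v by abel, inner_sub_right, inner_add_right]
  calc D - 2 * M ≤ |⟪w, c - c'⟫ + ⟪w, u⟫ - ⟪w, v⟫| := by
        cases abs_cases ⟪w, c - c'⟫ <;> cases abs_cases (⟪w, c - c'⟫ + ⟪w, u⟫ - ⟪w, v⟫) <;>
          linarith [abs_le.mp hu, abs_le.mp hv]
    _ = |⟪w, (c + u) - (c' + v)⟫| := by rw [hsplit]
    _ ≤ ‖w‖ * dist (c + u) (c' + v) := by
        rw [dist_eq_norm]; exact abs_real_inner_le_norm _ _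

end InnerProduct

theorem pt_add_pt (a b c d : ℝ) : pt a b + pt c d = pt (a + c) (b + d) := by
  ext k; fin_cases k <;> simp [pt]

theorem pt_sub_pt (a b c d : ℝ) : pt a b - pt c d = pt (a - c) (b - d) := by
  ext k; fin_cases k <;> simp [pt]

theorem inner_pt_pt (a b c d : ℝ) : ⟪pt a b, pt c d⟫ = a * c + b * d := by
  simp [PiLp.inner_apply, Fin.sum_univ_two, pt]
  ring

theorem norm_pt (a b : ℝ) : ‖pt a b‖ = √(a ^ 2 + b ^ 2) := by
  simp [EuclideanSpace.norm_eq, Fin.sum_univ_two, pt, sq_abs]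

/-- `hapex` bounds the projection of the vertices `(0, ±1/2)`, `hside` that of the other four. -/
theorem abs_inner_pt_le_of_mem_hexK {r u v M : ℝ} (hapex : |v| / 2 ≤ M)
    (hside : |u| * (√(1 - r ^ 2) / 2) + |v| * (|r| / 2) ≤ M) {p : Plane} (hp : p ∈ hexK r) :
    |⟪pt u v, p⟫| ≤ M := by
  refine abs_inner_le_of_mem_convexHull ?_ hp
  have hx : 0 ≤ √(1 - r ^ 2) / 2 := by positivity
  have hxy (su sv : ℝ) (hsu : |su| = 1) (hsv : |sv| = 1) :
      |u * (su * (√(1 - r ^ 2) / 2)) + v * (sv * (r / 2))| ≤ M := by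
    refine (abs_add_le _ _).trans (le_of_eq_of_le ?_ hside)
    simp only [abs_mul, hsu, hsv, abs_of_nonneg hx, abs_div, abs_two]
    ring
  simp only [Set.mem_insert_iff, Set.mem_singleton_iff]
  rintro v' (rfl | rfl | rfl | rfl | rfl | rfl) <;> rw [inner_pt_pt]
  · simpa [abs_mul, div_eq_mul_inv] using hapex
  · simpa using hxy 1 1 (by norm_num) (by norm_num)
  · simpa using hxy 1 (-1) (by norm_num) (by norm_num)
  · simpa [abs_mul, div_eq_mul_inv] using hapex
  · simpa using hxy (-1) (-1) (by norm_num) (by norm_num)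
  · simpa using hxy (-1) 1 (by norm_num) (by norm_num)

theorem center_sub_center (r : ℝ) (i j i' j' : ℤ) :
    center r i j - center r i' j' =
      pt (((2 * (i - i') + (j - j') : ℤ) : ℝ) * (√(1 - r ^ 2) / 2))
        (((j - j' : ℤ) : ℝ) * (r / 2 + 1 / 2)) := by
  simp only [center, pt_sub_pt]
  push_cast
  ring_nf

theorem sub_two_mul_le_mul_dist_of_mem_tile {r u v M D : ℝ} (hapex : |v| / 2 ≤ M)
    (hside : |u| * (√(1 - r ^ 2) / 2) + |v| * (|r| / 2) ≤ M) {i j i' j' : ℤ}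
    (hD : D ≤ |u * (((2 * (i - i') + (j - j') : ℤ) : ℝ) * (√(1 - r ^ 2) / 2)) +
      v * (((j - j' : ℤ) : ℝ) * (r / 2 + 1 / 2))|)
    {p q : Plane} (hp : p ∈ tile r i j) (hq : q ∈ tile r i' j') :
    D - 2 * M ≤ √(u ^ 2 + v ^ 2) * dist p q := by
  obtain ⟨p, hp, rfl⟩ := hp
  obtain ⟨q, hq, rfl⟩ := hq
  rw [← norm_pt]
  refine sub_two_mul_le_norm_mul_dist (abs_inner_pt_le_of_mem_hexK hapex hside hp)
    (abs_inner_pt_le_of_mem_hexK hapex hside hq) ?_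
  rwa [center_sub_center, inner_pt_pt]

theorem sqrt_one_sub_five_sixths_sq_div_two : √(1 - (5 / 6 : ℝ) ^ 2) / 2 = √11 / 12 := by
  rw [show 1 - (5 / 6 : ℝ) ^ 2 = 11 / 6 ^ 2 by norm_num, Real.sqrt_div' _ (by positivity),
    Real.sqrt_sq (by norm_num)]
  ring

theorem sub_two_mul_le_mul_dist_of_mem_tile_five_sixths {u v M D : ℝ} (hapex : |v| / 2 ≤ M)
    (hside : |u| * (√11 / 12) + |v| * (5 / 12) ≤ M) {i j i' j' : ℤ}
    (hD : D ≤ |u * (((2 * (i - i') + (j - j') : ℤ) : ℝ) * (√11 / 12)) +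
      v * (((j - j' : ℤ) : ℝ) * (11 / 12))|)
    {p q : Plane} (hp : p ∈ tile (5 / 6) i j) (hq : q ∈ tile (5 / 6) i' j') :
    D - 2 * M ≤ √(u ^ 2 + v ^ 2) * dist p q := by
  refine sub_two_mul_le_mul_dist_of_mem_tile hapex ?_ ?_ hp hq <;>
    rw [sqrt_one_sub_five_sixths_sq_div_two] <;> norm_num at hside hD ⊢ <;> assumption

theorem five_sixths_le_dist_of_mem_tile_of_nonneg {i j i' j' : ℤ} (hne : (i, j) ≠ (i', j'))
    (h5 : 5 ∣ (i - i') - 2 * (j - j')) (hpos : 0 ≤ 2 * (i - i') + (j - j'))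
    {p q : Plane} (hp : p ∈ tile (5 / 6) i j) (hq : q ∈ tile (5 / 6) i' j') :
    5 / 6 ≤ dist p q := by
  have bound {u v M D : ℝ} := sub_two_mul_le_mul_dist_of_mem_tile_five_sixths (u := u) (v := v)
    (M := M) (D := D) (hp := hp) (hq := hq)
  have hab : i - i' ≠ 0 ∨ j - j' ≠ 0 := by
    by_contra! h
    exact hne (by simp only [Prod.mk.injEq]; omega)
  generalize i - i' = a at *
  generalize j - j' = b at *
  have h11 : √11 ^ 2 = 11 := Real.sq_sqrt (by norm_num)
  obtain rfl | hb | hb : b = 0 ∨ (b = 1 ∨ b = -1) ∨ 2 ≤ |b| := by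
    rw [le_abs']; omega
  · have ha : (10 : ℝ) ≤ ((2 * a + 0 : ℤ) : ℝ) := by exact_mod_cast (by omega : (10 : ℤ) ≤ 2 * a + 0)
    have h := bound (u := 1) (v := 0) (M := √11 / 12) (D := 10 * (√11 / 12)) (by simp; positivity)
      (by simp) (by rw [one_mul, zero_mul, add_zero, abs_of_nonneg (by positivity)]; gcongr)
    have h3 : 3 ≤ √11 := Real.le_sqrt_of_sq_le (by norm_num)
    norm_num at h
    linarith
  · have ht : (5 : ℝ) ≤ ((2 * a + b : ℤ) : ℝ) := by exact_mod_cast (by omega : (5 : ℤ) ≤ 2 * a + b)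
    have h := bound (u := √11 / 4) (v := b / 12) (M := 19 / 72) (D := 11 / 9)
      (by rcases hb with rfl | rfl <;> norm_num)
      (by
        rw [abs_of_nonneg (by positivity : (0 : ℝ) ≤ √11 / 4)]
        rcases hb with rfl | rfl <;> norm_num <;> nlinarith)
      (by
        rw [le_abs]; left
        rcases hb with rfl | rfl <;> push_cast at ht ⊢ <;> nlinarith)
    have hnorm : √((√11 / 4) ^ 2 + ((b : ℝ) / 12) ^ 2) = 5 / 6 := by
      rw [Real.sqrt_eq_iff_mul_self_eq_of_pos (by norm_num)]
      rcases hb with rfl | rfl <;> push_cast <;> nlinarith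
    rw [hnorm] at h
    linarith
  · have hb' : (2 : ℝ) ≤ |(b : ℝ)| := by exact_mod_cast hb
    have h := bound (u := 0) (v := 1) (M := 1 / 2) (D := 11 / 6) (by norm_num) (by norm_num)
      (by rw [zero_mul, zero_add, one_mul, abs_mul, abs_of_pos (by norm_num : (0 : ℝ) < 11 / 12)]
          linarith)
    norm_num at h
    linarith

theorem five_sixths_le_dist_of_mem_tile {i j i' j' : ℤ} (hne : (i, j) ≠ (i', j'))
    (h5 : 5 ∣ (i - i') - 2 * (j - j')) {p q : Plane} (hp : p ∈ tile (5 / 6) i j)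
    (hq : q ∈ tile (5 / 6) i' j') :
    5 / 6 ≤ dist p q := by
  rcases le_total 0 (2 * (i - i') + (j - j')) with hpos | hneg
  · exact five_sixths_le_dist_of_mem_tile_of_nonneg hne h5 hpos hp hq
  · rw [dist_comm]
    exact five_sixths_le_dist_of_mem_tile_of_nonneg hne.symm (by omega) (by omega) hq hp

def tileColour : ℤ × ℤ →+ ZMod 5 :=
  AddMonoidHom.mk' (fun p => (p.1 : ZMod 5) - 2 * p.2) fun p q => by
    simp only [Prod.fst_add, Prod.snd_add, Int.cast_add]
    ring

theorem mem_ker_tileColour {a b : ℤ} : (a, b) ∈ tileColour.ker ↔ 5 ∣ a - 2 * b := by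
  have := ZMod.intCast_zmod_eq_zero_iff_dvd (a - 2 * b) 5
  push_cast at this
  simp [tileColour, ← this]

theorem closure_eq_ker_tileColour :
    AddSubgroup.closure {((3 : ℤ), (-1 : ℤ)), ((2 : ℤ), (1 : ℤ))} = tileColour.ker := by
  apply le_antisymm
  · rw [AddSubgroup.closure_le]
    rintro _ (rfl | rfl) <;> rw [SetLike.mem_coe, mem_ker_tileColour] <;> norm_num
  · rintro ⟨a, b⟩ hab
    obtain ⟨k, hk⟩ := mem_ker_tileColour.mp hab
    have hdecomp : ((a, b) : ℤ × ℤ) = k • ((3 : ℤ), (-1 : ℤ)) + (b + k) • ((2 : ℤ), (1 : ℤ)) := by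
      simp only [Prod.smul_mk, Prod.mk_add_mk, smul_eq_mul, Prod.mk.injEq]
      omega
    rw [hdecomp]
    exact add_mem (zsmul_mem (AddSubgroup.subset_closure (by simp)) k)
      (zsmul_mem (AddSubgroup.subset_closure (by simp)) (b + k))

theorem index_ker_tileColour : tileColour.ker.index = 5 := by
  have hsurj : Function.Surjective tileColour := fun z =>
    ⟨((z.val : ℤ), 0), by simp [tileColour]⟩
  rw [AddSubgroup.index_ker, AddMonoidHom.range_eq_top.mpr hsurj, AddSubgroup.card_top,
    Nat.card_zmod]

theorem five_sixths_mem_sameColourDists :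
    5 / 6 ∈ sameColourDists (5 / 6)
      (AddSubgroup.closure {((3 : ℤ), (-1 : ℤ)), ((2 : ℤ), (1 : ℤ))}) := by
  have top : pt 0 (1 / 2) ∈ hexK (5 / 6) := subset_convexHull ℝ _ (by simp)
  have bottom : pt 0 (-(1 / 2)) ∈ hexK (5 / 6) := subset_convexHull ℝ _ (by simp)
  refine ⟨0, 0, -1, 2, _, _, by decide, ?_, ⟨_, top, rfl⟩, ⟨_, bottom, rfl⟩, ?_⟩
  · rw [closure_eq_ker_tileColour, mem_ker_tileColour]
    norm_num
  · norm_num [dist_eq_norm, center, pt_add_pt, pt_sub_pt, norm_pt]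

/-- with r = 5/6 and Λ = ⟨(3, -1), (2, 1)⟩ ≤ ℤ² of index 5,
the separation of the induced 5-colouring of the tiles T(i, j) equals the stated
value, and this value is attained. -/
theorem statement8 :
    (AddSubgroup.closure {(((3) : ℤ), ((-1) : ℤ)), (((2) : ℤ), ((1) : ℤ))}).index = 5 ∧
    IsLeast
      (sameColourDists (5 / 6)
        (AddSubgroup.closure {(((3) : ℤ), ((-1) : ℤ)), (((2) : ℤ), ((1) : ℤ))}))
      ((5 : ℝ) / 6) := by
  refine ⟨closure_eq_ker_tileColour ▸ index_ker_tileColour, five_sixths_mem_sameColourDists, ?_⟩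
  rintro d ⟨i, j, i', j', p, q, hne, hmem, hp, hq, rfl⟩
  rw [closure_eq_ker_tileColour, mem_ker_tileColour] at hmem
  exact five_sixths_le_dist_of_mem_tile hne hmem hp hq
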